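/- arXiv:2201.08113 — 3 statements merged into one kernel-verified Lean document; each statement's English description precedes it below -/
import Mathlib

section
/- Assume Σ_ℓ(0) is integral. Let α ∈ Σ_ℓ, let β, β′ ∈ Σ_ℓ^α, and let x ∈ Cone(C_ℓ^β). Then: (1) v_β(x) ≥ v_{β′}(x), with equality if and only if x ∈ Cone(C_ℓ^{β′}); (2) v_β(x) ≥ 0, with equality if and only if x ∈ Cone(C_ℓ^α). -/
/-!
Put `w := v_β − v_{β′}`, so that `β = β′ − 2ℓφ(w)`. For `γ ∈ Σ_ℓ`,
`w(γ − β) = (E_ℓ(w) + w(γ)) + (E_ℓ(−w) − w(β′))`, and both brackets are nonnegative because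
`γ, β′ ∈ Σ_ℓ`. So `v_β − v_{β′}` is nonnegative on the generators of `Cone(C_ℓ^β)`, hence on the
cone, and it vanishes at `x` only if `x` is a combination of generators with `E_ℓ(w) + w(γ) = 0`.
For those, additivity of `φ` and the symmetry `u(φ(w)) = w(φ(u))` (both consequences of
`β ∘ φ = N`) show `γ + 2ℓφ(w) ∈ Σ_ℓ`, so `γ − β = (γ + 2ℓφ(w)) − β′` generates `Cone(C_ℓ^{β′})`.
Part (2) is the case `β′ = α`, `v_{β′} = 0`.
-/

open scoped BigOperators Pointwise

namespace NFC

/-- The coordinatewise embedding of the lattice `X = ℤ^g` into `X_ℝ = ℝ^g`. -/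
def iota {g : ℕ} (x : Fin g → ℤ) : Fin g → ℝ := fun i => (x i : ℝ)

/-- The ℝ-linear extension of an integral linear functional `u ∈ X^∨` to `X_ℝ`. -/
noncomputable def extd {g : ℕ} (u : (Fin g → ℤ) →ₗ[ℤ] ℤ) (x : Fin g → ℝ) : ℝ :=
  ∑ i, (u (Pi.single i 1) : ℝ) * x i

/-- `E_ℓ(u) = ℓ · u(φ(u))`. -/
def El {g : ℕ} {Y : Submodule ℤ (Fin g → ℤ)}
    (φ : ((Fin g → ℤ) →ₗ[ℤ] ℤ) → Y) (ℓ : ℕ) (u : (Fin g → ℤ) →ₗ[ℤ] ℤ) : ℤ :=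
  (ℓ : ℤ) * u (φ u : Fin g → ℤ)

/-- `Σ_ℓ = {α ∈ X : E_ℓ(u) + u(α) ≥ 0 for all u ∈ X^∨}`. -/
def SigmaL {g : ℕ} {Y : Submodule ℤ (Fin g → ℤ)}
    (φ : ((Fin g → ℤ) →ₗ[ℤ] ℤ) → Y) (ℓ : ℕ) : Set (Fin g → ℤ) :=
  {α | ∀ u : (Fin g → ℤ) →ₗ[ℤ] ℤ, 0 ≤ El φ ℓ u + u α}

/-- The Voronoi polytope `Σ_ℓ(c)`, defined w.r.t. the norm `‖z‖ = √(B̄(z,z))`. -/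
noncomputable def VorP {g : ℕ} {Y : Submodule ℤ (Fin g → ℤ)}
    (Bb : (Fin g → ℝ) →ₗ[ℝ] (Fin g → ℝ) →ₗ[ℝ] ℝ)
    (φ : ((Fin g → ℤ) →ₗ[ℤ] ℤ) → Y) (ℓ : ℕ)
    (c : (Fin g → ℤ) →ₗ[ℤ] ℤ) : Set (Fin g → ℝ) :=
  {x | ∀ u : (Fin g → ℤ) →ₗ[ℤ] ℤ,
    Real.sqrt (Bb (x - iota ((2 * (ℓ : ℤ)) • ((φ c : Fin g → ℤ))))
               (x - iota ((2 * (ℓ : ℤ)) • ((φ c : Fin g → ℤ))))) ≤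
    Real.sqrt (Bb (x - iota ((2 * (ℓ : ℤ)) • ((φ u : Fin g → ℤ))))
               (x - iota ((2 * (ℓ : ℤ)) • ((φ u : Fin g → ℤ)))))}

/-- A subset `Δ ⊆ X_ℝ` is integral: a bounded convex polytope equal to the convex hull
of `Δ ∩ X`, symmetric about `0`, containing `0`, with `Δ ∩ X` containing a ℤ-basis. -/
def IsIntegral {g : ℕ} (Δ : Set (Fin g → ℝ)) : Prop :=
  Bornology.IsBounded Δ ∧
  Δ = convexHull ℝ (Δ ∩ Set.range (iota (g := g))) ∧
  Δ = -Δ ∧ (0 : Fin g → ℝ) ∈ Δ ∧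
  ∃ b : Module.Basis (Fin g) ℤ (Fin g → ℤ), ∀ i, iota (b i) ∈ Δ

/-- `Σ_ℓ^α = (α + 2ℓφ(X^∨)) ∩ Σ_ℓ`. -/
def SigmaAlpha {g : ℕ} {Y : Submodule ℤ (Fin g → ℤ)}
    (φ : ((Fin g → ℤ) →ₗ[ℤ] ℤ) → Y) (ℓ : ℕ) (α : Fin g → ℤ) : Set (Fin g → ℤ) :=
  {β | β ∈ SigmaL φ ℓ ∧ ∃ u : (Fin g → ℤ) →ₗ[ℤ] ℤ, β = α + (2 * (ℓ : ℤ)) • ((φ u : Fin g → ℤ))}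

/-- The convex cone generated by a set `S` (the set of all nonnegative combinations). -/
def conicHull {M : Type*} [AddCommMonoid M] [Module ℝ M] (S : Set M) : Set M :=
  {y | ∃ (n : ℕ) (c : Fin n → ℝ) (v : Fin n → M),
    (∀ i, 0 ≤ c i) ∧ (∀ i, v i ∈ S) ∧ y = ∑ i, c i • v i}

/-- `Cone(C_ℓ^β)`: the convex cone in `X_ℝ` generated by `{γ − β : γ ∈ Σ_ℓ}`. -/
def coneC {g : ℕ} {Y : Submodule ℤ (Fin g → ℤ)}
    (φ : ((Fin g → ℤ) →ₗ[ℤ] ℤ) → Y) (ℓ : ℕ) (β : Fin g → ℤ) : Set (Fin g → ℝ) :=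
  conicHull {w | ∃ γ ∈ SigmaL φ ℓ, w = iota (γ - β)}

lemma extd_iota {g : ℕ} (u : (Fin g → ℤ) →ₗ[ℤ] ℤ) (z : Fin g → ℤ) :
    extd u (iota z) = (u z : ℝ) := by
  conv_rhs => rw [← Finset.univ_sum_single z]
  have hsingle : ∀ i, (Pi.single i (z i) : Fin g → ℤ) = z i • Pi.single i 1 := fun i => by
    ext j; by_cases h : j = i <;> simp [h]
  simp only [map_sum, hsingle, map_smul, smul_eq_mul, Int.cast_sum, Int.cast_mul]
  simp [extd, iota, mul_comm]

lemma extd_sub {g : ℕ} (u v : (Fin g → ℤ) →ₗ[ℤ] ℤ) (x : Fin g → ℝ) :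
    extd (u - v) x = extd u x - extd v x := by
  simp [extd, sub_mul]

lemma extd_zero {g : ℕ} (x : Fin g → ℝ) : extd (0 : (Fin g → ℤ) →ₗ[ℤ] ℤ) x = 0 := by
  simp [extd]

noncomputable def extdLinear {g : ℕ} (u : (Fin g → ℤ) →ₗ[ℤ] ℤ) : (Fin g → ℝ) →ₗ[ℝ] ℝ where
  toFun := extd u
  map_add' x y := by simp [extd, mul_add, Finset.sum_add_distrib]
  map_smul' c x := by simp [extd, Finset.mul_sum, mul_left_comm]

@[simp]
lemma extdLinear_apply {g : ℕ} (u : (Fin g → ℤ) →ₗ[ℤ] ℤ) (x : Fin g → ℝ) :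
    extdLinear u x = extd u x := rfl

section Polarization

variable {X : Type*} [AddCommGroup X] {Y : Submodule ℤ X} {B : Y →ₗ[ℤ] X →ₗ[ℤ] ℤ}

lemma injective_of_pos (hBpos : ∀ y : Y, y ≠ 0 → 0 < B y (y : X)) : Function.Injective B := by
  refine (injective_iff_map_eq_zero B).mpr fun y hy => ?_
  by_contra hne
  simpa [hy] using hBpos y hne

lemma map_add_of_injective (hB : Function.Injective B) {N : ℤ} {φ : Module.Dual ℤ X → Y}
    (hφ : ∀ u, B (φ u) = N • u) (u v : Module.Dual ℤ X) : φ (u + v) = φ u + φ v :=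
  hB (by rw [map_add, hφ, hφ, hφ, smul_add])

lemma apply_comm_of_symm (hBsymm : ∀ y z : Y, B y (z : X) = B z (y : X)) {N : ℤ} (hN : N ≠ 0)
    {φ : Module.Dual ℤ X → Y} (hφ : ∀ u, B (φ u) = N • u) (u v : Module.Dual ℤ X) :
    u (φ v : X) = v (φ u : X) := by
  refine mul_left_cancel₀ hN ?_
  simpa [hφ] using hBsymm (φ u) (φ v)

end Polarization

section Sigma

variable {g : ℕ} {Y : Submodule ℤ (Fin g → ℤ)} {φ : Module.Dual ℤ (Fin g → ℤ) →+ Y} {ℓ : ℕ}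

/-- The paper's `β = α − 2ℓφ(v_β)`, as a function of `v_β`. -/
def shift (φ : Module.Dual ℤ (Fin g → ℤ) → Y) (ℓ : ℕ) (α : Fin g → ℤ)
    (v : Module.Dual ℤ (Fin g → ℤ)) : Fin g → ℤ :=
  α - (2 * (ℓ : ℤ)) • (φ v : Fin g → ℤ)

@[simp]
lemma shift_zero (α : Fin g → ℤ) : shift φ ℓ α 0 = α := by
  simp [shift]

lemma sub_apply_sub_shift (α γ : Fin g → ℤ) (va vb : Module.Dual ℤ (Fin g → ℤ)) :
    (va - vb) (γ - shift φ ℓ α va) =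
      (El φ ℓ (va - vb) + (va - vb) γ) +
        (El φ ℓ (-(va - vb)) + (-(va - vb)) (shift φ ℓ α vb)) := by
  simp only [El, shift, map_sub, map_neg, map_smul, LinearMap.neg_apply, Submodule.coe_sub,
    Submodule.coe_neg, smul_eq_mul]
  ring

lemma sub_apply_sub_shift_nonneg {α γ : Fin g → ℤ} {va vb : Module.Dual ℤ (Fin g → ℤ)}
    (hb : shift φ ℓ α vb ∈ SigmaL φ ℓ) (hγ : γ ∈ SigmaL φ ℓ) :
    0 ≤ (va - vb) (γ - shift φ ℓ α va) := by
  rw [sub_apply_sub_shift]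
  exact add_nonneg (hγ _) (hb _)

lemma add_smul_mem_SigmaL (hsymm : ∀ u v : Module.Dual ℤ (Fin g → ℤ),
      u (φ v : Fin g → ℤ) = v (φ u : Fin g → ℤ))
    {γ : Fin g → ℤ} (hγ : γ ∈ SigmaL φ ℓ) {w : Module.Dual ℤ (Fin g → ℤ)}
    (hw : El φ ℓ w + w γ = 0) : γ + (2 * (ℓ : ℤ)) • (φ w : Fin g → ℤ) ∈ SigmaL φ ℓ := by
  intro u
  have h := hγ (u + w)
  simp only [El, map_add, LinearMap.add_apply, Submodule.coe_add, map_smul,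
    smul_eq_mul] at h hw ⊢
  rw [hsymm w u] at h
  linarith

lemma exists_sub_eq_sub_shift (hsymm : ∀ u v : Module.Dual ℤ (Fin g → ℤ),
      u (φ v : Fin g → ℤ) = v (φ u : Fin g → ℤ))
    {α γ : Fin g → ℤ} {va vb : Module.Dual ℤ (Fin g → ℤ)}
    (hb : shift φ ℓ α vb ∈ SigmaL φ ℓ) (hγ : γ ∈ SigmaL φ ℓ)
    (h : (va - vb) (γ - shift φ ℓ α va) = 0) :
    ∃ γ' ∈ SigmaL φ ℓ, γ' - shift φ ℓ α vb = γ - shift φ ℓ α va := by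
  rw [sub_apply_sub_shift] at h
  have hw : El φ ℓ (va - vb) + (va - vb) γ = 0 := by
    linarith [hγ (va - vb), hb (-(va - vb))]
  refine ⟨_, add_smul_mem_SigmaL hsymm hγ hw, ?_⟩
  simp only [shift, map_sub, Submodule.coe_sub, smul_sub]
  abel

end Sigma

section ConicHull

variable {M : Type*} [AddCommGroup M] [Module ℝ M] {S T : Set M} {f : M →ₗ[ℝ] ℝ} {z : M}

lemma nonneg_of_mem_conicHull (hS : ∀ s ∈ S, 0 ≤ f s) (hz : z ∈ conicHull S) : 0 ≤ f z := by
  obtain ⟨n, c, v, hc, hv, rfl⟩ := hz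
  simp only [map_sum, map_smul, smul_eq_mul]
  exact Finset.sum_nonneg fun i _ => mul_nonneg (hc i) (hS _ (hv i))

lemma mem_conicHull_of_map_eq_zero (hS : ∀ s ∈ S, 0 ≤ f s) (hz : z ∈ conicHull S)
    (hfz : f z = 0) (hT : ∀ s ∈ S, f s = 0 → s ∈ T) (hT0 : 0 ∈ T) : z ∈ conicHull T := by
  classical
  obtain ⟨n, c, v, hc, hv, rfl⟩ := hz
  have hterm : ∀ i, c i * f (v i) = 0 := by
    simp only [map_sum, map_smul, smul_eq_mul] at hfz
    exact fun i => (Finset.sum_eq_zero_iff_of_nonneg fun j _ =>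
      mul_nonneg (hc j) (hS _ (hv j))).mp hfz i (Finset.mem_univ i)
  refine ⟨n, c, fun i => if f (v i) = 0 then v i else 0, hc, fun i => ?_,
    Finset.sum_congr rfl fun i _ => ?_⟩
  · dsimp only
    split_ifs with h
    exacts [hT _ (hv i) h, hT0]
  · dsimp only
    split_ifs with h
    · rfl
    · simp [(mul_eq_zero.mp (hterm i)).resolve_right h]

end ConicHull

section Cone

variable {g : ℕ} {Y : Submodule ℤ (Fin g → ℤ)} {φ : Module.Dual ℤ (Fin g → ℤ) →+ Y} {ℓ : ℕ}
  {α : Fin g → ℤ} {va vb : Module.Dual ℤ (Fin g → ℤ)} {z : Fin g → ℝ}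

lemma sub_nonneg_on_coneC_generators (hb : shift φ ℓ α vb ∈ SigmaL φ ℓ) :
    ∀ s ∈ {w | ∃ γ ∈ SigmaL φ ℓ, w = iota (γ - shift φ ℓ α va)}, 0 ≤ extdLinear (va - vb) s := by
  rintro _ ⟨γ, hγ, rfl⟩
  rw [extdLinear_apply, extd_iota]
  exact_mod_cast sub_apply_sub_shift_nonneg hb hγ

lemma extd_le_of_mem_coneC (hb : shift φ ℓ α vb ∈ SigmaL φ ℓ)
    (hz : z ∈ coneC φ ℓ (shift φ ℓ α va)) : extd vb z ≤ extd va z := by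
  have h := nonneg_of_mem_conicHull (sub_nonneg_on_coneC_generators hb) hz
  rwa [extdLinear_apply, extd_sub, sub_nonneg] at h

lemma extd_eq_iff_mem_coneC (hsymm : ∀ u v : Module.Dual ℤ (Fin g → ℤ),
      u (φ v : Fin g → ℤ) = v (φ u : Fin g → ℤ))
    (ha : shift φ ℓ α va ∈ SigmaL φ ℓ) (hb : shift φ ℓ α vb ∈ SigmaL φ ℓ)
    (hz : z ∈ coneC φ ℓ (shift φ ℓ α va)) :
    extd va z = extd vb z ↔ z ∈ coneC φ ℓ (shift φ ℓ α vb) := by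
  refine ⟨fun h => ?_, fun h => le_antisymm (extd_le_of_mem_coneC ha h)
    (extd_le_of_mem_coneC hb hz)⟩
  refine mem_conicHull_of_map_eq_zero (sub_nonneg_on_coneC_generators hb) hz
    (by rw [extdLinear_apply, extd_sub, h, sub_self]) ?_ ⟨_, hb, by ext; simp [iota]⟩
  rintro _ ⟨γ, hγ, rfl⟩ hγ0
  rw [extdLinear_apply, extd_iota, Int.cast_eq_zero] at hγ0
  obtain ⟨γ', hγ', hγγ'⟩ := exists_sub_eq_sub_shift hsymm hb hγ hγ0
  exact ⟨γ', hγ', by rw [hγγ']⟩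

end Cone

theorem statement14_general
    (g : ℕ)
    (Y : Submodule ℤ (Fin g → ℤ))
    (B : Y →ₗ[ℤ] (Fin g → ℤ) →ₗ[ℤ] ℤ)
    (hBsymm : ∀ y z : Y, B y (z : Fin g → ℤ) = B z (y : Fin g → ℤ))
    (hBpos : ∀ y : Y, y ≠ 0 → 0 < B y (y : Fin g → ℤ))
    (N : ℕ) (hNpos : 0 < N)
    (φ : ((Fin g → ℤ) →ₗ[ℤ] ℤ) → Y)
    (hφ : ∀ u : (Fin g → ℤ) →ₗ[ℤ] ℤ, B (φ u) = (N : ℤ) • u)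
    (ℓ : ℕ)
    (α : Fin g → ℤ) (hα : α ∈ SigmaL φ ℓ)
    (vβ vβ' : (Fin g → ℤ) →ₗ[ℤ] ℤ)
    (hβ : α - (2 * (ℓ : ℤ)) • ((φ vβ : Fin g → ℤ)) ∈ SigmaL φ ℓ)
    (hβ' : α - (2 * (ℓ : ℤ)) • ((φ vβ' : Fin g → ℤ)) ∈ SigmaL φ ℓ)
    (x : Fin g → ℝ)
    (hx : x ∈ coneC φ ℓ (α - (2 * (ℓ : ℤ)) • ((φ vβ : Fin g → ℤ)))) :
    (extd vβ' x ≤ extd vβ x) ∧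
    (extd vβ x = extd vβ' x ↔
      x ∈ coneC φ ℓ (α - (2 * (ℓ : ℤ)) • ((φ vβ' : Fin g → ℤ)))) ∧
    (0 ≤ extd vβ x) ∧
    (extd vβ x = 0 ↔ x ∈ coneC φ ℓ α) := by
  have hsymm := apply_comm_of_symm hBsymm (Int.natCast_ne_zero.mpr hNpos.ne') hφ
  obtain ⟨Φ, rfl⟩ : ∃ Φ : Module.Dual ℤ (Fin g → ℤ) →+ Y, ⇑Φ = φ :=
    ⟨AddMonoidHom.mk' φ (map_add_of_injective (injective_of_pos hBpos) hφ), rfl⟩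
  have hα0 : shift Φ ℓ α 0 ∈ SigmaL Φ ℓ := by rwa [shift_zero]
  refine ⟨extd_le_of_mem_coneC hβ' hx, extd_eq_iff_mem_coneC hsymm hβ hβ' hx, ?_, ?_⟩
  · simpa only [extd_zero] using extd_le_of_mem_coneC hα0 hx
  · simpa only [extd_zero, shift_zero] using extd_eq_iff_mem_coneC hsymm hβ hα0 hx

/-- for `β = α − 2ℓφ(v_β)`, `β′ = α − 2ℓφ(v_{β′})` in `Σ_ℓ^α` and
`x ∈ Cone(C_ℓ^β)`: (1) `v_β(x) ≥ v_{β′}(x)`, with equality iff `x ∈ Cone(C_ℓ^{β′})`;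
(2) `v_β(x) ≥ 0`, with equality iff `x ∈ Cone(C_ℓ^α)`. -/
theorem statement14
    (g : ℕ) (hg : 1 ≤ g)
    (Y : Submodule ℤ (Fin g → ℤ))
    (hYfin : Y.toAddSubgroup.index ≠ 0)
    (B : Y →ₗ[ℤ] (Fin g → ℤ) →ₗ[ℤ] ℤ)
    (hBsymm : ∀ y z : Y, B y (z : Fin g → ℤ) = B z (y : Fin g → ℤ))
    (hBpos : ∀ y : Y, y ≠ 0 → 0 < B y (y : Fin g → ℤ))
    (N : ℕ) (hN : N = (LinearMap.range B).toAddSubgroup.index) (hNpos : 0 < N)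
    (φ : ((Fin g → ℤ) →ₗ[ℤ] ℤ) → Y)
    (hφ : ∀ u : (Fin g → ℤ) →ₗ[ℤ] ℤ, B (φ u) = (N : ℤ) • u)
    (Bb : (Fin g → ℝ) →ₗ[ℝ] (Fin g → ℝ) →ₗ[ℝ] ℝ)
    (hBbsymm : ∀ x y : Fin g → ℝ, Bb x y = Bb y x)
    (hBbpos : ∀ x : Fin g → ℝ, x ≠ 0 → 0 < Bb x x)
    (hBbcompat : ∀ (y : Y) (x : Fin g → ℤ), Bb (iota (y : Fin g → ℤ)) (iota x) = (B y x : ℝ))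
    (ℓ : ℕ) (hℓ : 0 < ℓ)
    (hint : IsIntegral (VorP Bb φ ℓ 0))
    (α : Fin g → ℤ) (hα : α ∈ SigmaL φ ℓ)
    (vβ vβ' : (Fin g → ℤ) →ₗ[ℤ] ℤ)
    (hβ : α - (2 * (ℓ : ℤ)) • ((φ vβ : Fin g → ℤ)) ∈ SigmaL φ ℓ)
    (hβ' : α - (2 * (ℓ : ℤ)) • ((φ vβ' : Fin g → ℤ)) ∈ SigmaL φ ℓ)
    (x : Fin g → ℝ)
    (hx : x ∈ coneC φ ℓ (α - (2 * (ℓ : ℤ)) • ((φ vβ : Fin g → ℤ)))) :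
    (extd vβ' x ≤ extd vβ x) ∧
    (extd vβ x = extd vβ' x ↔
      x ∈ coneC φ ℓ (α - (2 * (ℓ : ℤ)) • ((φ vβ' : Fin g → ℤ)))) ∧
    (0 ≤ extd vβ x) ∧
    (extd vβ x = 0 ↔ x ∈ coneC φ ℓ α) :=
  statement14_general g Y B hBsymm hBpos N hNpos φ hφ ℓ α hα vβ vβ' hβ hβ' x hx

end NFC
end

section
/- Let σ ⊆ ℝ × X^∨_ℝ be the convex cone generated by a finite subset of ℤ × X^∨ all of whose elements have nonnegative first coordinate (equivalently, (1,0) ∈ σ^∨). Then σ ∩ ({0} × X^∨_ℝ) = {(0,0)} if and only if for every (z₀, z) ∈ ℤ × X there exists a ∈ ℤ with (a, z) ∈ σ^∨; i.e., if and only if ℤ·(1,0) + (σ^∨ ∩ (ℤ × X)) = ℤ × X. -/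
/-!
Both conditions are equivalent to: every generator `(u₀, u)` with `u₀ = 0` is zero. For the
cone, a nonnegative combination of generators with first coordinate `0` uses only such
generators. For the dual, pairing `(0, u)` with `(a, -u)` rules out `u ≠ 0`; conversely, if all
generators with `u₀ = 0` vanish, the others have `u₀ ≥ 1`, and `a` larger than the finitely
many values `-u(z)` puts `(a, z)` in `σ^∨`.
-/

open scoped BigOperators

namespace NFC

/-- The embedding of `ℤ × X` into `ℝ × X^∨_ℝ` (resp. `ℝ × X_ℝ`). -/
def emb {g : ℕ} (p : ℤ × (Fin g → ℤ)) : ℝ × (Fin g → ℝ) := ((p.1 : ℝ), iota p.2)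

/-- The dual cone of a subset `σ ⊆ ℝ × X^∨_ℝ` inside `ℝ × X_ℝ`, with respect to the
pairing `⟨(u₀, u), (x₀, x)⟩ = u₀·x₀ + u(x)`. -/
def dualCone {g : ℕ} (σ : Set (ℝ × (Fin g → ℝ))) : Set (ℝ × (Fin g → ℝ)) :=
  {q | ∀ w ∈ σ, 0 ≤ w.1 * q.1 + ∑ i, w.2 i * q.2 i}

section ConicHull

variable {M : Type*} [AddCommMonoid M] [Module ℝ M]

theorem subset_conicHull (T : Set M) : T ⊆ conicHull T := fun w hw =>
  ⟨1, fun _ => 1, fun _ => w, fun _ => zero_le_one, fun _ => hw, by simp⟩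

theorem zero_mem_conicHull (T : Set M) : (0 : M) ∈ conicHull T :=
  ⟨0, Fin.elim0, Fin.elim0, fun i => i.elim0, fun i => i.elim0, by simp⟩

/-- In a nonnegative combination with `f`-value `0`, every term has `f`-value `0`. -/
theorem conicHull_inter_ker_subset (f : M →ₗ[ℝ] ℝ) {T : Set M}
    (hpos : ∀ w ∈ T, 0 ≤ f w) (hker : ∀ w ∈ T, f w = 0 → w = 0) :
    conicHull T ∩ {x | f x = 0} ⊆ {0} := by
  rintro _ ⟨⟨n, c, v, hc, hv, rfl⟩, hf⟩
  have hterm : ∀ j, c j * f (v j) = 0 := by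
    simp only [Set.mem_ofPred_eq, map_sum, map_smul, smul_eq_mul] at hf
    exact fun j => (Finset.sum_eq_zero_iff_of_nonneg fun j _ =>
      mul_nonneg (hc j) (hpos _ (hv j))).mp hf j (Finset.mem_univ j)
  refine Finset.sum_eq_zero fun j _ => ?_
  rcases mul_eq_zero.mp (hterm j) with h | h
  · rw [h, zero_smul]
  · rw [hker _ (hv j) h, smul_zero]

end ConicHull

section Pairing

variable {g : ℕ}

def pairing (w q : ℝ × (Fin g → ℝ)) : ℝ := w.1 * q.1 + ∑ i, w.2 i * q.2 i

theorem pairing_sum_smul {n : ℕ} (c : Fin n → ℝ) (v : Fin n → ℝ × (Fin g → ℝ))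
    (q : ℝ × (Fin g → ℝ)) : pairing (∑ j, c j • v j) q = ∑ j, c j * pairing (v j) q := by
  simp only [pairing, Prod.fst_sum, Prod.snd_sum, Prod.smul_fst, Prod.smul_snd, smul_eq_mul,
    Finset.sum_apply, Pi.smul_apply, Finset.sum_mul, mul_add, Finset.mul_sum,
    Finset.sum_add_distrib]
  rw [Finset.sum_comm]
  simp only [mul_assoc]

theorem pairing_emb (p z : ℤ × (Fin g → ℤ)) :
    pairing (emb p) (emb z) = ((p.1 * z.1 + ∑ i, p.2 i * z.2 i : ℤ) : ℝ) := by
  simp [pairing, emb, iota]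

theorem mem_dualCone_conicHull_iff {T : Set (ℝ × (Fin g → ℝ))} {q : ℝ × (Fin g → ℝ)} :
    q ∈ dualCone (conicHull T) ↔ ∀ w ∈ T, 0 ≤ pairing w q := by
  refine ⟨fun h w hw => h w (subset_conicHull T hw), ?_⟩
  rintro h _ ⟨n, c, v, hc, hv, rfl⟩
  change 0 ≤ pairing _ q
  rw [pairing_sum_smul]
  exact Finset.sum_nonneg fun j _ => mul_nonneg (hc j) (h _ (hv j))

end Pairing

variable {g : ℕ} {S : Set (ℤ × (Fin g → ℤ))}

theorem emb_eq_zero_iff {p : ℤ × (Fin g → ℤ)} : emb p = 0 ↔ p = 0 := by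
  simp [emb, iota, Prod.ext_iff, funext_iff]

theorem conicHull_emb_inter_eq_zero_iff (hSpos : ∀ p ∈ S, 0 ≤ p.1) :
    conicHull (emb '' S) ∩ {w | w.1 = 0} = {0} ↔ ∀ p ∈ S, p.1 = 0 → p.2 = 0 := by
  constructor
  · intro h p hp hp1
    have hmem : emb p ∈ conicHull (emb '' S) ∩ {w | w.1 = 0} :=
      ⟨subset_conicHull _ ⟨p, hp, rfl⟩, by simp [emb, hp1]⟩
    rw [h, Set.mem_singleton_iff, emb_eq_zero_iff] at hmem
    rw [hmem, Prod.snd_zero]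
  · intro h
    refine subset_antisymm ?_ (Set.singleton_subset_iff.mpr ⟨zero_mem_conicHull _, rfl⟩)
    refine conicHull_inter_ker_subset (LinearMap.fst ℝ _ _) ?_ ?_
    · rintro _ ⟨p, hp, rfl⟩
      exact Int.cast_nonneg (hSpos p hp)
    · rintro _ ⟨p, hp, rfl⟩ hp1
      have hp1 : p.1 = 0 := Int.cast_eq_zero.mp hp1
      exact emb_eq_zero_iff.mpr (Prod.ext hp1 (h p hp hp1))

theorem eq_zero_of_forall_exists_emb_mem_dualCone
    (h : ∀ z : Fin g → ℤ, ∃ a : ℤ, emb (a, z) ∈ dualCone (conicHull (emb '' S))) :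
    ∀ p ∈ S, p.1 = 0 → p.2 = 0 := by
  intro p hp hp1
  obtain ⟨a, ha⟩ := h (-p.2)
  have hle := mem_dualCone_conicHull_iff.mp ha (emb p) ⟨p, hp, rfl⟩
  rw [pairing_emb, Int.cast_nonneg_iff] at hle
  simp only [hp1, zero_mul, zero_add, Pi.neg_apply, mul_neg, Finset.sum_neg_distrib,
    Left.nonneg_neg_iff] at hle
  have hsq := (Finset.sum_eq_zero_iff_of_nonneg fun i _ => mul_self_nonneg (p.2 i)).mp
    (le_antisymm hle (Finset.sum_nonneg fun i _ => mul_self_nonneg (p.2 i)))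
  exact funext fun i => mul_self_eq_zero.mp (hsq i (Finset.mem_univ i))

theorem exists_emb_mem_dualCone (hSfin : S.Finite) (hSpos : ∀ p ∈ S, 0 ≤ p.1)
    (h : ∀ p ∈ S, p.1 = 0 → p.2 = 0) (z : Fin g → ℤ) :
    ∃ a : ℤ, emb (a, z) ∈ dualCone (conicHull (emb '' S)) := by
  obtain ⟨b, hb⟩ := (hSfin.image fun p => -∑ i, p.2 i * z i).bddAbove
  refine ⟨max b 0, mem_dualCone_conicHull_iff.mpr ?_⟩
  rintro _ ⟨p, hp, rfl⟩
  rw [pairing_emb, Int.cast_nonneg_iff]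
  rcases (hSpos p hp).eq_or_lt with hp1 | hp1
  · simp [← hp1, h p hp hp1.symm]
  · have hbp : -∑ i, p.2 i * z i ≤ b := hb ⟨p, hp, rfl⟩
    nlinarith [le_max_left b 0, le_max_right b 0]

theorem statement18_general
    (g : ℕ)
    (S : Set (ℤ × (Fin g → ℤ))) (hSfin : S.Finite)
    (hSpos : ∀ p ∈ S, 0 ≤ p.1)
    (σ : Set (ℝ × (Fin g → ℝ))) (hσ : σ = conicHull (emb '' S)) :
    (σ ∩ {p : ℝ × (Fin g → ℝ) | p.1 = 0} = {(0 : ℝ × (Fin g → ℝ))}) ↔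
    (∀ z : Fin g → ℤ, ∃ a : ℤ, emb (a, z) ∈ dualCone σ) := by
  subst hσ
  rw [conicHull_emb_inter_eq_zero_iff hSpos]
  exact ⟨exists_emb_mem_dualCone hSfin hSpos, eq_zero_of_forall_exists_emb_mem_dualCone⟩

/-- for a convex cone `σ ⊆ ℝ × X^∨_ℝ` generated by a finite subset of
`ℤ × X^∨` whose elements have nonnegative first coordinate,
`σ ∩ ({0} × X^∨_ℝ) = {(0,0)}` iff for every `z ∈ X` there is `a ∈ ℤ` with `(a, z) ∈ σ^∨`,
i.e. iff `ℤ·(1,0) + (σ^∨ ∩ (ℤ × X)) = ℤ × X`. -/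
theorem statement18
    (g : ℕ) (hg : 1 ≤ g)
    (S : Set (ℤ × (Fin g → ℤ))) (hSfin : S.Finite)
    (hSpos : ∀ p ∈ S, 0 ≤ p.1)
    (σ : Set (ℝ × (Fin g → ℝ))) (hσ : σ = conicHull (emb '' S)) :
    (σ ∩ {p : ℝ × (Fin g → ℝ) | p.1 = 0} = {(0 : ℝ × (Fin g → ℝ))}) ↔
    (∀ z : Fin g → ℤ, ∃ a : ℤ, emb (a, z) ∈ dualCone σ) :=
  statement18_general g S hSfin hSpos σ hσ

end NFC
end

section
/- Σ₁(0) = {(x₁, x₂) ∈ ℝ² : |x₁| ≤ q + r, |x₂| ≤ p + r, |x₁ − x₂| ≤ p + q}; this set is the convex hull of the six lattice points ±(q+r, p+r), ±(q+r, −p+r), ±(−q+r, p+r), it contains the standard basis vectors (1,0) and (0,1), and it is integral; consequently Σ_ℓ(0) = ℓ·Σ₁(0) is integral for every positive integer ℓ. -/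
open scoped BigOperators Pointwise

namespace NFC

/-- `φ(u₁, u₂) = ((q+r)u₁ + r·u₂, r·u₁ + (p+r)u₂)`, the adjugate of the Gram matrix
`[[p+r, −r], [−r, q+r]]` applied to `u`. -/
def phiPQR (p q r : ℤ) (u : Fin 2 → ℤ) : Fin 2 → ℤ :=
  ![(q + r) * u 0 + r * u 1, r * u 0 + (p + r) * u 1]

/-- The standard pairing `u(x) = u₁x₁ + u₂x₂` on `ℤ² × ℤ²`. -/
def dotZ (u x : Fin 2 → ℤ) : ℤ := u 0 * x 0 + u 1 * x 1

/-- The ℝ-linear extension of `u ∈ X^∨ = ℤ²` applied to `x ∈ ℝ²`. -/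
noncomputable def dotR (u : Fin 2 → ℤ) (x : Fin 2 → ℝ) : ℝ :=
  (u 0 : ℝ) * x 0 + (u 1 : ℝ) * x 1

/-- `E(u) = u(φ(u))`. -/
def EPQR (p q r : ℤ) (u : Fin 2 → ℤ) : ℤ := dotZ u (phiPQR p q r u)

/-- The Voronoi polytope `Σ_ℓ(0) = {x ∈ ℝ² : ℓ·E(u) + u(x) ≥ 0 for all u ∈ X^∨}`. -/
def SigPQR (p q r : ℤ) (ℓ : ℕ) : Set (Fin 2 → ℝ) :=
  {x | ∀ u : Fin 2 → ℤ, 0 ≤ ((ℓ : ℤ) * EPQR p q r u : ℤ) + dotR u x}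

/-!
The six inequalities of `Σ₁(0)` for `u = ±e₁, ±e₂, ±(e₁ - e₂)` cut out the hexagon. Conversely,
the hexagon lies in the convex hull of its six vertices (each of its points lies on a horizontal
chord whose ends lie on edges), and every vertex `v` lies in `Σ₁(0)`: for `u = (a, b)` one has
`E(u) + u(v) = q (a² ± a) + p (b² ± b) + r ((a + b)² ± (a + b))`, and `n² ± n ≥ 0` on `ℤ`.
Scaling the defining inequalities gives `Σ_ℓ(0) = ℓ • Σ₁(0)`, and a convex set that is balanced
and spanned by lattice points stays so under scaling by a positive integer.
-/

open Set

section Integral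

variable {g : ℕ}

lemma smul_iota (ℓ : ℕ) (v : Fin g → ℤ) : (ℓ : ℝ) • iota v = iota ((ℓ : ℤ) • v) := by
  ext i; simp [iota]

lemma IsIntegral.nat_smul {Δ : Set (Fin g → ℝ)} (h : IsIntegral Δ) {ℓ : ℕ} (hℓ : 0 < ℓ) :
    IsIntegral ((ℓ : ℝ) • Δ) := by
  obtain ⟨hbdd, hhull, hneg, hzero, b, hb⟩ := h
  have hconv₁ : Convex ℝ Δ := hhull ▸ convex_convexHull ℝ _
  have hconv : Convex ℝ ((ℓ : ℝ) • Δ) := hconv₁.smul _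
  refine ⟨hbdd.smul₀ _, ?_, by rw [← smul_set_neg, ← hneg], zero_mem_smul_set hzero, b, ?_⟩
  · refine (convexHull_min inter_subset_left hconv).antisymm' ?_
    calc (ℓ : ℝ) • Δ = convexHull ℝ ((ℓ : ℝ) • (Δ ∩ range iota)) := by
          rw [convexHull_smul, ← hhull]
      _ ⊆ convexHull ℝ ((ℓ : ℝ) • Δ ∩ range iota) := by
          refine convexHull_mono ?_
          rintro _ ⟨x, ⟨hxΔ, v, rfl⟩, rfl⟩
          exact ⟨smul_mem_smul_set hxΔ, _, (smul_iota ℓ v).symm⟩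
  · intro i
    have hbal : Balanced ℝ Δ := (balanced_iff_neg_mem hconv₁).2 fun x hx => by
      rw [hneg] at hx; simpa using hx
    refine hbal.subset_smul ?_ (hb i)
    simpa using (Nat.one_le_cast (α := ℝ)).2 hℓ

end Integral

section Segment

variable {E : Type*} [AddCommGroup E] [Module ℝ E]

lemma exists_mem_segment_apply_eq (f g : E →ₗ[ℝ] ℝ) {a b : E} {y : ℝ}
    (hy : y ∈ uIcc (f a) (f b)) (hg : g a = g b) :
    ∃ z ∈ segment ℝ a b, f z = y ∧ g z = g a := by
  rw [← segment_eq_uIcc] at hy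
  obtain ⟨z, hz, rfl⟩ := (image_segment ℝ f.toAffineMap a b).symm ▸ hy
  have hgz := image_segment ℝ g.toAffineMap a b ▸ mem_image_of_mem g.toAffineMap hz
  simp only [LinearMap.coe_toAffineMap, hg, segment_same, mem_singleton_iff] at hgz
  exact ⟨z, hz, rfl, hgz.trans hg.symm⟩

lemma exists_mem_convexHull_apply_eq (f g : E →ₗ[ℝ] ℝ) {s : Set E} {a b : E} (ha : a ∈ s)
    (hb : b ∈ s) {y : ℝ} (hy : y ∈ uIcc (f a) (f b)) (hg : g a = g b) :
    ∃ z ∈ convexHull ℝ s, f z = y ∧ g z = g a :=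
  let ⟨z, hz, hfz, hgz⟩ := exists_mem_segment_apply_eq f g hy hg
  ⟨z, (convex_convexHull ℝ s).segment_subset (subset_convexHull ℝ s ha)
    (subset_convexHull ℝ s hb) hz, hfz, hgz⟩

end Segment

section Voronoi

variable (p q r : ℤ)

lemma EPQR_eq (u : Fin 2 → ℤ) :
    EPQR p q r u = q * u 0 ^ 2 + p * u 1 ^ 2 + r * (u 0 + u 1) ^ 2 := by
  simp only [EPQR, dotZ, phiPQR, Matrix.cons_val_zero, Matrix.cons_val_one]
  ring

lemma EPQR_neg (u : Fin 2 → ℤ) : EPQR p q r (-u) = EPQR p q r u := by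
  simp only [EPQR_eq, Pi.neg_apply]; ring

noncomputable def dotRLinear (u : Fin 2 → ℤ) : (Fin 2 → ℝ) →ₗ[ℝ] ℝ where
  toFun := dotR u
  map_add' x y := by simp only [dotR, Pi.add_apply]; ring
  map_smul' c x := by simp only [dotR, Pi.smul_apply, smul_eq_mul, RingHom.id_apply]; ring

@[simp] lemma dotRLinear_apply (u : Fin 2 → ℤ) (x : Fin 2 → ℝ) : dotRLinear u x = dotR u x := rfl

lemma convex_SigPQR (ℓ : ℕ) : Convex ℝ (SigPQR p q r ℓ) := by
  have h : SigPQR p q r ℓ = ⋂ u, {x | -(((ℓ : ℤ) * EPQR p q r u : ℤ) : ℝ) ≤ dotRLinear u x} := by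
    ext x; simp [SigPQR, neg_le_iff_add_nonneg']
  exact h ▸ convex_iInter fun u => convex_halfSpace_ge (dotRLinear u).isLinear _

lemma neg_SigPQR (ℓ : ℕ) : -SigPQR p q r ℓ = SigPQR p q r ℓ := by
  ext x
  simp only [mem_neg, SigPQR, mem_ofPred_eq]
  constructor <;> intro h u <;> simpa [EPQR_neg, dotR] using h (-u)

lemma iota_mem_SigPQR_iff (ℓ : ℕ) (v : Fin 2 → ℤ) :
    iota v ∈ SigPQR p q r ℓ ↔ ∀ u, 0 ≤ ℓ * EPQR p q r u + dotZ u v := by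
  simp only [SigPQR, mem_ofPred_eq, dotR, iota, dotZ]
  exact_mod_cast Iff.rfl

lemma SigPQR_eq_smul {ℓ : ℕ} (hℓ : 0 < ℓ) : SigPQR p q r ℓ = (ℓ : ℝ) • SigPQR p q r 1 := by
  have hℓ' : (0 : ℝ) < ℓ := by exact_mod_cast hℓ
  ext x
  rw [mem_smul_set_iff_inv_smul_mem₀ hℓ'.ne']
  refine forall_congr' fun u => ?_
  rw [show dotR u ((ℓ : ℝ)⁻¹ • x) = (ℓ : ℝ)⁻¹ * dotR u x from map_smul (dotRLinear u) _ x,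
    iff_comm, ← mul_nonneg_iff_of_pos_left hℓ', mul_add, mul_inv_cancel_left₀ hℓ'.ne']
  push_cast
  rw [one_mul]

def hexagon (a b c : ℤ) : Set (Fin 2 → ℝ) :=
  {x | |x 0| ≤ (a : ℝ) ∧ |x 1| ≤ (b : ℝ) ∧ |x 0 - x 1| ≤ (c : ℝ)}

def hexVertices : Set (Fin 2 → ℝ) :=
  {iota ![q + r, p + r], iota ![-(q + r), -(p + r)],
   iota ![q + r, -p + r], iota ![-(q + r), p - r],
   iota ![-q + r, p + r], iota ![q - r, -(p + r)]}

lemma SigPQR_one_subset_hexagon : SigPQR p q r 1 ⊆ hexagon (q + r) (p + r) (p + q) := by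
  intro x hx
  have e1 := hx ![1, 0]
  have e2 := hx ![-1, 0]
  have e3 := hx ![0, 1]
  have e4 := hx ![0, -1]
  have e5 := hx ![1, -1]
  have e6 := hx ![-1, 1]
  simp only [EPQR_eq, dotR, Matrix.cons_val_zero, Matrix.cons_val_one] at e1 e2 e3 e4 e5 e6
  push_cast at e1 e2 e3 e4 e5 e6
  refine ⟨?_, ?_, ?_⟩ <;> rw [abs_le] <;> push_cast <;> constructor <;> linarith

lemma hexVertices_subset_SigPQR (hp : 0 ≤ p) (hq : 0 ≤ q) (hr : 0 ≤ r) :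
    hexVertices p q r ⊆ SigPQR p q r 1 := by
  have hsq : ∀ n : ℤ, 0 ≤ n ^ 2 + n ∧ 0 ≤ n ^ 2 - n := fun n =>
    ⟨by nlinarith [Int.le_self_sq (-n)], by nlinarith [Int.le_self_sq n]⟩
  intro x hx
  simp only [hexVertices, mem_insert_iff, mem_singleton_iff] at hx
  rcases hx with rfl | rfl | rfl | rfl | rfl | rfl <;>
  · rw [iota_mem_SigPQR_iff]
    intro u
    have ha := hsq (u 0)
    have hb := hsq (u 1)
    have hab := hsq (u 0 + u 1)
    simp only [EPQR_eq, dotZ, Nat.cast_one, one_mul, Matrix.cons_val_zero, Matrix.cons_val_one]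
    linarith [mul_nonneg hq ha.1, mul_nonneg hq ha.2, mul_nonneg hp hb.1, mul_nonneg hp hb.2,
      mul_nonneg hr hab.1, mul_nonneg hr hab.2]

lemma neg_hexVertices : -hexVertices p q r = hexVertices p q r := by
  ext x
  simp only [hexVertices, mem_neg, mem_insert_iff, mem_singleton_iff, neg_eq_iff_eq_neg]
  have h : ∀ a b : ℤ, -iota ![a, b] = iota ![-a, -b] := fun a b => by
    ext i; fin_cases i <;> simp [iota]
  simp only [h, neg_neg, neg_add, sub_eq_add_neg]
  tauto

lemma iota_mem_hexagon_iff {a b c : ℤ} {v : Fin 2 → ℤ} :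
    iota v ∈ hexagon a b c ↔ |v 0| ≤ a ∧ |v 1| ≤ b ∧ |v 0 - v 1| ≤ c := by
  simp only [hexagon, mem_ofPred_eq, iota]
  exact_mod_cast Iff.rfl

lemma neg_mem_hexagon {a b c : ℤ} {x : Fin 2 → ℝ} (hx : x ∈ hexagon a b c) :
    -x ∈ hexagon a b c := by
  simpa [hexagon, neg_add_eq_sub, abs_sub_comm] using hx

lemma exists_mem_convexHull_hexVertices_le {x : Fin 2 → ℝ}
    (hx : x ∈ hexagon (q + r) (p + r) (p + q)) :
    ∃ z ∈ convexHull ℝ (hexVertices p q r), z 1 = x 1 ∧ x 0 ≤ z 0 := by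
  obtain ⟨h0, h1, h2⟩ := hx
  rw [abs_le] at h0 h1 h2
  push_cast at h0 h1 h2
  -- the right end of the chord at height `x 1` lies on the edge `x₀ = q + r` or `x₀ - x₁ = p + q`
  rcases le_total (r - p : ℝ) (x 1) with hy | hy
  · obtain ⟨z, hz, hz1, hz0⟩ := exists_mem_convexHull_apply_eq (dotRLinear ![0, 1])
      (dotRLinear ![1, 0]) (a := iota ![q + r, -p + r]) (b := iota ![q + r, p + r])
      (s := hexVertices p q r) (by simp [hexVertices]) (by simp [hexVertices]) (y := x 1)
      (by simpa [dotR, iota] using mem_uIcc.2 (Or.inl ⟨by linarith, h1.2⟩))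
      (by simp [dotR, iota])
    have hz0' : z 0 = q + r := by simpa [dotR, iota] using hz0
    exact ⟨z, hz, by simpa [dotR] using hz1, by linarith⟩
  · obtain ⟨z, hz, hz1, hz0⟩ := exists_mem_convexHull_apply_eq (dotRLinear ![0, 1])
      (dotRLinear ![1, -1]) (a := iota ![q - r, -(p + r)]) (b := iota ![q + r, -p + r])
      (s := hexVertices p q r) (by simp [hexVertices]) (by simp [hexVertices]) (y := x 1)
      (by simpa [dotR, iota] using mem_uIcc.2 (Or.inl ⟨h1.1, by linarith⟩))
      (by simp [dotR, iota])
    have hz1' : z 1 = x 1 := by simpa [dotR] using hz1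
    have hz0' : z 0 - z 1 = p + q := by simpa [dotR, iota, ← sub_eq_add_neg, add_comm] using hz0
    exact ⟨z, hz, hz1', by linarith⟩

lemma hexagon_subset_convexHull_hexVertices :
    hexagon (q + r) (p + r) (p + q) ⊆ convexHull ℝ (hexVertices p q r) := by
  intro x hx
  obtain ⟨R, hR, hR1, hR0⟩ := exists_mem_convexHull_hexVertices_le p q r hx
  -- the left end of the chord through `x` is minus the right end of the chord through `-x`
  obtain ⟨L, hL, hL1, hL0⟩ := exists_mem_convexHull_hexVertices_le p q r (neg_mem_hexagon hx)
  have hL' : -L ∈ convexHull ℝ (hexVertices p q r) := by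
    rw [← neg_hexVertices, convexHull_neg]
    exact neg_mem_neg.2 hL
  rw [Pi.neg_apply] at hL0 hL1
  obtain ⟨z, hz, hz0, hz1⟩ := exists_mem_segment_apply_eq (dotRLinear ![1, 0])
    (dotRLinear ![0, 1]) (a := -L) (b := R) (y := x 0)
    (by simpa [dotR] using mem_uIcc.2 (Or.inl ⟨by linarith, hR0⟩)) (by simp [dotR, hL1, hR1])
  convert (convex_convexHull ℝ _).segment_subset hL' hR hz
  ext i; fin_cases i
  · simpa [dotR] using hz0.symm
  · simpa [dotR, hL1] using hz1.symm

lemma convexHull_hexVertices_subset_SigPQR (hp : 0 ≤ p) (hq : 0 ≤ q) (hr : 0 ≤ r) :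
    convexHull ℝ (hexVertices p q r) ⊆ SigPQR p q r 1 :=
  convexHull_min (hexVertices_subset_SigPQR p q r hp hq hr) (convex_SigPQR p q r 1)

lemma SigPQR_one_eq_hexagon (hp : 0 ≤ p) (hq : 0 ≤ q) (hr : 0 ≤ r) :
    SigPQR p q r 1 = hexagon (q + r) (p + r) (p + q) :=
  (SigPQR_one_subset_hexagon p q r).antisymm <| (hexagon_subset_convexHull_hexVertices p q r).trans
    (convexHull_hexVertices_subset_SigPQR p q r hp hq hr)

lemma SigPQR_one_eq_convexHull (hp : 0 ≤ p) (hq : 0 ≤ q) (hr : 0 ≤ r) :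
    SigPQR p q r 1 = convexHull ℝ (hexVertices p q r) :=
  ((SigPQR_one_subset_hexagon p q r).trans (hexagon_subset_convexHull_hexVertices p q r)).antisymm
    (convexHull_hexVertices_subset_SigPQR p q r hp hq hr)

lemma hexVertices_subset_range_iota : hexVertices p q r ⊆ range iota := by
  rintro _ (rfl | rfl | rfl | rfl | rfl | rfl) <;> exact mem_range_self _

lemma iota_single_mem_SigPQR_one (hp : 0 < p) (hq : 0 < q) (hr : 0 ≤ r) (i : Fin 2) :
    iota (Pi.single i 1) ∈ SigPQR p q r 1 := by
  rw [SigPQR_one_eq_hexagon p q r hp.le hq.le hr, iota_mem_hexagon_iff]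
  fin_cases i <;>
    simp only [Fin.zero_eta, Fin.mk_one, Pi.single_eq_same, Pi.single_eq_of_ne, ne_eq, one_ne_zero,
      zero_ne_one, not_false_eq_true, abs_one, abs_zero, abs_neg, sub_zero, zero_sub] <;>
    omega

lemma SigPQR_one_isIntegral (hp : 0 < p) (hq : 0 < q) (hr : 0 ≤ r) :
    IsIntegral (SigPQR p q r 1) := by
  have hhull := SigPQR_one_eq_convexHull p q r hp.le hq.le hr
  refine ⟨hhull ▸ (Finite.isCompact_convexHull ℝ (by simp [hexVertices])).isBounded, ?_,
    (neg_SigPQR p q r 1).symm, ?_, Pi.basisFun ℤ (Fin 2), fun i => by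
      simpa using iota_single_mem_SigPQR_one p q r hp hq hr i⟩
  · refine (convexHull_min inter_subset_left (convex_SigPQR p q r 1)).antisymm' ?_
    exact hhull.le.trans <| convexHull_mono <| subset_inter
      (hexVertices_subset_SigPQR p q r hp.le hq.le hr) (hexVertices_subset_range_iota p q r)
  · rw [SigPQR_one_eq_hexagon p q r hp.le hq.le hr]
    simp only [hexagon, mem_ofPred_eq, Pi.zero_apply, sub_zero, abs_zero]
    exact_mod_cast (by omega : 0 ≤ q + r ∧ 0 ≤ p + r ∧ 0 ≤ p + q)

end Voronoi

/-- explicit description of `Σ₁(0)` for the rank-2 form with Gram matrix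
`[[p+r, −r], [−r, q+r]]`: it is the hexagon `{|x₁| ≤ q+r, |x₂| ≤ p+r, |x₁−x₂| ≤ p+q}`,
the convex hull of the six lattice points `±(q+r, p+r)`, `±(q+r, −p+r)`, `±(−q+r, p+r)`;
it contains the standard basis vectors and is integral; consequently
`Σ_ℓ(0) = ℓ·Σ₁(0)` is integral for every positive integer `ℓ`. -/
theorem statement19
    (p q r : ℤ) (hp : 0 < p) (hq : 0 < q) (hr : 0 ≤ r) :
    (SigPQR p q r 1 =
      {x : Fin 2 → ℝ | |x 0| ≤ ((q + r : ℤ) : ℝ) ∧ |x 1| ≤ ((p + r : ℤ) : ℝ) ∧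
        |x 0 - x 1| ≤ ((p + q : ℤ) : ℝ)}) ∧
    (SigPQR p q r 1 = convexHull ℝ
      {iota ![q + r, p + r], iota ![-(q + r), -(p + r)],
       iota ![q + r, -p + r], iota ![-(q + r), p - r],
       iota ![-q + r, p + r], iota ![q - r, -(p + r)]}) ∧
    (iota ![1, 0] ∈ SigPQR p q r 1 ∧ iota ![0, 1] ∈ SigPQR p q r 1) ∧
    IsIntegral (SigPQR p q r 1) ∧
    (∀ ℓ : ℕ, 0 < ℓ →
      SigPQR p q r ℓ = (ℓ : ℝ) • SigPQR p q r 1 ∧ IsIntegral (SigPQR p q r ℓ)) := by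
  have hint := SigPQR_one_isIntegral p q r hp hq hr
  refine ⟨SigPQR_one_eq_hexagon p q r hp.le hq.le hr, SigPQR_one_eq_convexHull p q r hp.le hq.le hr,
    ⟨?_, ?_⟩, hint, fun ℓ hℓ =>
      ⟨SigPQR_eq_smul p q r hℓ, SigPQR_eq_smul p q r hℓ ▸ hint.nat_smul hℓ⟩⟩
  · simpa only [show (Pi.single 0 1 : Fin 2 → ℤ) = ![1, 0] by decide]
      using iota_single_mem_SigPQR_one p q r hp hq hr 0
  · simpa only [show (Pi.single 1 1 : Fin 2 → ℤ) = ![0, 1] by decide]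
      using iota_single_mem_SigPQR_one p q r hp hq hr 1

end NFC
end
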